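/- arXiv:2203.17041 — 2 statements merged into one kernel-verified Lean document; each statement's English description precedes it below -/
import Mathlib

section
/- Let G = (V,E) be a finite simple graph with no isolated vertices, let Γ_G = (N,γ) be the independent set game on G, and let {x_S}_{S ⊆ N, S ≠ ∅} be a population monotonic allocation scheme of Γ_G. If an edge i ∈ E is pendant in G (i.e., has an endpoint of degree one), then x_{S,i} = 1 for every nonempty S ⊆ N with i ∈ S. -/
open Finset

variable {V : Type*} [Fintype V] [DecidableEq V]

/-- `I` is an independent set of the graph `G`. -/
def Indep (G : SimpleGraph V) (I : Finset V) : Prop :=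
  ∀ u ∈ I, ∀ v ∈ I, ¬ G.Adj u v

/-- The independence number of `G` restricted to the vertex set `U`,
i.e. `α(G[U])`: the maximum size of an independent set contained in `U`. -/
noncomputable def alphaOn (G : SimpleGraph V) (U : Set V) : ℕ :=
  sSup {n : ℕ | ∃ I : Finset V, ↑I ⊆ U ∧ Indep G I ∧ I.card = n}

/-- `δ(v)`: the set of edges of `G` incident to the vertex `v`. -/
def incEdges (G : SimpleGraph V) (v : V) : Set (Sym2 V) :=
  {e | e ∈ G.edgeSet ∧ v ∈ e}

/-- `δ(v)` as a finset. -/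
def incFinset (G : SimpleGraph V) [DecidableRel G.Adj] (v : V) : Finset (Sym2 V) :=
  G.edgeFinset.filter (fun e => v ∈ e)

/-- `V⟨S⟩`: the set of vertices of `G` all of whose incident edges lie in `S`. -/
def onlyInc (G : SimpleGraph V) (S : Set (Sym2 V)) : Set V :=
  {v | incEdges G v ⊆ S}

/-- The characteristic function of the independent set game on `G`:
`γ(S) = α(G[V⟨S⟩])`. -/
noncomputable def gammaIS (G : SimpleGraph V) (S : Finset (Sym2 V)) : ℕ :=
  alphaOn G (onlyInc G ↑S)

/-- `x` is a population monotonic allocation scheme (PMAS) of the independent set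
game on `G`: it is nonnegative, efficient, and monotone.  Coalitions are the
nonempty subsets of the player set `N = E(G)` (`G.edgeFinset`). -/
def IsPMAS (G : SimpleGraph V) [DecidableRel G.Adj]
    (x : Finset (Sym2 V) → Sym2 V → ℝ) : Prop :=
  (∀ S ⊆ G.edgeFinset, ∀ i ∈ S, 0 ≤ x S i) ∧
  (∀ S ⊆ G.edgeFinset, S.Nonempty → ∑ i ∈ S, x S i = (gammaIS G S : ℝ)) ∧
  (∀ S T : Finset (Sym2 V), S ⊆ T → T ⊆ G.edgeFinset → S.Nonempty →
    ∀ i ∈ S, x S i ≤ x T i)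

/-- An edge of `G` is pendant if one of its endpoints has degree one. -/
def PendantEdge (G : SimpleGraph V) [DecidableRel G.Adj] (e : Sym2 V) : Prop :=
  e ∈ G.edgeSet ∧ ∃ v ∈ e, G.degree v = 1

/-- A non-pendant edge of type I: not incident to any pendant edge. -/
def TypeI (G : SimpleGraph V) [DecidableRel G.Adj] (e : Sym2 V) : Prop :=
  e ∈ G.edgeSet ∧ ¬ PendantEdge G e ∧
    ∀ f : Sym2 V, PendantEdge G f → ¬ ∃ w : V, w ∈ e ∧ w ∈ f

/-- A non-pendant edge of type II: incident to some pendant edge. -/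
def TypeII (G : SimpleGraph V) [DecidableRel G.Adj] (e : Sym2 V) : Prop :=
  e ∈ G.edgeSet ∧ ¬ PendantEdge G e ∧
    ∃ f : Sym2 V, PendantEdge G f ∧ ∃ w : V, w ∈ e ∧ w ∈ f

/-- The vertex `v` has distance at most two to some pendant vertex of `G`. -/
def NearPendant (G : SimpleGraph V) [DecidableRel G.Adj] (v : V) : Prop :=
  ∃ p : V, G.degree p = 1 ∧ ∃ w : G.Walk v p, w.length ≤ 2


section Aux

variable (G : SimpleGraph V)

lemma alpha_set_nonempty (U : Set V) :
    {n : ℕ | ∃ I : Finset V, ↑I ⊆ U ∧ Indep G I ∧ I.card = n}.Nonempty := by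
  refine ⟨0, ∅, by simp, ?_, by simp⟩
  intro u hu; simp at hu

lemma alpha_set_bdd (U : Set V) :
    BddAbove {n : ℕ | ∃ I : Finset V, ↑I ⊆ U ∧ Indep G I ∧ I.card = n} := by
  refine ⟨Fintype.card V, ?_⟩
  rintro n ⟨I, -, -, rfl⟩
  exact I.card_le_univ.trans_eq (Finset.card_univ)

lemma le_alphaOn {U : Set V} {I : Finset V} (hIU : ↑I ⊆ U) (hInd : Indep G I) :
    I.card ≤ alphaOn G U :=
  le_csSup (alpha_set_bdd G U) ⟨I, hIU, hInd, rfl⟩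

lemma alphaOn_le {U : Set V} {n : ℕ}
    (h : ∀ I : Finset V, ↑I ⊆ U → Indep G I → I.card ≤ n) :
    alphaOn G U ≤ n := by
  refine csSup_le (alpha_set_nonempty G U) ?_
  rintro m ⟨I, h1, h2, rfl⟩
  exact h I h1 h2

lemma alphaOn_spec (U : Set V) :
    ∃ I : Finset V, ↑I ⊆ U ∧ Indep G I ∧ I.card = alphaOn G U :=
  Nat.sSup_mem (alpha_set_nonempty G U) (alpha_set_bdd G U)

variable [DecidableRel G.Adj]

lemma gamma_pendant (hiso : ∀ v : V, G.degree v ≠ 0) {a b : V}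
    (hab : G.Adj a b) (hdeg : G.degree a = 1) :
    gammaIS G {s(a,b)} = 1 := by
  obtain ⟨c, hc⟩ := Finset.card_eq_one.mp hdeg
  have hbc : b = c := by
    have : b ∈ G.neighborFinset a := by simpa using hab
    rw [hc] at this; simpa using this
  subst hbc
  apply le_antisymm
  · -- upper bound
    apply alphaOn_le
    intro I hIU hInd
    by_contra hcard
    push_neg at hcard
    obtain ⟨u, hu, v, hv, huv⟩ := Finset.one_lt_card.mp hcard
    have hsub : ∀ w ∈ I, w = a ∨ w = b := by
      intro w hw
      have hwU : w ∈ onlyInc G ↑({s(a,b)} : Finset (Sym2 V)) := hIU hw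
      have h := hiso w
      rw [SimpleGraph.degree] at h
      obtain ⟨y, hy⟩ := Finset.card_ne_zero.mp h
      have hadj : G.Adj w y := by simpa using hy
      have hmem : s(w, y) ∈ incEdges G w := ⟨hadj, Sym2.mem_mk_left w y⟩
      have := hwU hmem
      simp only [Finset.coe_singleton, Set.mem_singleton_iff] at this
      have : w ∈ s(a, b) := this ▸ Sym2.mem_mk_left w y
      simpa using this
    rcases hsub u hu with rfl | rfl <;> rcases hsub v hv with rfl | rfl
    · exact huv rfl
    · exact hInd _ hu _ hv hab
    · exact hInd _ hv _ hu hab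
    · exact huv rfl
  · -- lower bound: {a} works
    have h1 : (↑({a} : Finset V) : Set V) ⊆ onlyInc G ↑({s(a,b)} : Finset (Sym2 V)) := by
      intro w hw
      simp only [Finset.coe_singleton, Set.mem_singleton_iff] at hw
      subst hw
      intro e he
      obtain ⟨hee, hwe⟩ := he
      obtain ⟨y, rfl⟩ := Sym2.mem_iff_exists.mp hwe
      have hadj : G.Adj w y := G.mem_edgeSet.mp hee
      have : y ∈ G.neighborFinset w := by simpa using hadj
      rw [hc] at this
      simp only [Finset.mem_singleton] at this
      subst this
      simp
    have h2 : Indep G {a} := by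
      intro u hu v hv
      simp only [Finset.mem_singleton] at hu hv
      subst hu; subst hv; exact G.irrefl
    have := le_alphaOn G h1 h2
    simpa [gammaIS] using this

lemma gamma_erase (S : Finset (Sym2 V)) {a b : V} (hab : G.Adj a b) :
    gammaIS G S ≤ gammaIS G (S.erase s(a,b)) + 1 := by
  obtain ⟨I, hIU, hInd, hcard⟩ := alphaOn_spec G (onlyInc G ↑S)
  set J : Finset V := I \ {a, b} with hJdef
  have hJU : (↑J : Set V) ⊆ onlyInc G ↑(S.erase s(a,b)) := by
    intro w hw
    simp only [hJdef, Finset.coe_sdiff, Set.mem_diff, Finset.coe_insert,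
      Finset.coe_singleton, Set.mem_insert_iff, Set.mem_singleton_iff] at hw
    obtain ⟨hwI, hwab⟩ := hw
    push_neg at hwab
    intro e he
    have heS : e ∈ (↑S : Set (Sym2 V)) := hIU hwI he
    simp only [Finset.coe_erase, Set.mem_diff, Set.mem_singleton_iff]
    refine ⟨heS, ?_⟩
    rintro rfl
    rcases Sym2.mem_iff.mp he.2 with rfl | rfl
    · exact hwab.1 rfl
    · exact hwab.2 rfl
  have hJInd : Indep G J := fun u hu v hv =>
    hInd u (Finset.mem_sdiff.mp hu).1 v (Finset.mem_sdiff.mp hv).1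
  have hJcard : I.card ≤ J.card + 1 := by
    by_cases ha : a ∈ I
    · have hb : b ∉ I := fun hb => hInd a ha b hb hab
      have hIsub : I ⊆ insert a J := by
        intro w hw
        rcases eq_or_ne w a with rfl | hwa
        · exact Finset.mem_insert_self _ _
        · refine Finset.mem_insert_of_mem ?_
          refine Finset.mem_sdiff.mpr ⟨hw, ?_⟩
          simp only [Finset.mem_insert, Finset.mem_singleton]
          rintro (rfl | rfl)
          · exact hwa rfl
          · exact hb hw
      calc I.card ≤ (insert a J).card := Finset.card_le_card hIsub
        _ ≤ J.card + 1 := Finset.card_insert_le _ _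
    · have hIsub : I ⊆ insert b J := by
        intro w hw
        rcases eq_or_ne w b with rfl | hwb
        · exact Finset.mem_insert_self _ _
        · refine Finset.mem_insert_of_mem ?_
          refine Finset.mem_sdiff.mpr ⟨hw, ?_⟩
          simp only [Finset.mem_insert, Finset.mem_singleton]
          rintro (rfl | rfl)
          · exact ha hw
          · exact hwb rfl
      calc I.card ≤ (insert b J).card := Finset.card_le_card hIsub
        _ ≤ J.card + 1 := Finset.card_insert_le _ _
  calc gammaIS G S = I.card := hcard.symm
    _ ≤ J.card + 1 := hJcard
    _ ≤ gammaIS G (S.erase s(a,b)) + 1 := by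
        exact Nat.add_le_add_right (le_alphaOn G hJU hJInd) 1

end Aux

/-- Lemma 3 of the paper.  If `x` is a PMAS of the independent
set game on `G` and the edge `i` is pendant in `G`, then `x_{S,i} = 1` for every
nonempty coalition `S` containing `i`. -/
theorem stmt_3 (G : SimpleGraph V) [DecidableRel G.Adj]
    (hiso : ∀ v : V, G.degree v ≠ 0)
    (x : Finset (Sym2 V) → Sym2 V → ℝ) (hx : IsPMAS G x)
    (i : Sym2 V) (hpend : PendantEdge G i) :
    ∀ S ⊆ G.edgeFinset, i ∈ S → x S i = 1 := by
  intro S hS hiS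
  obtain ⟨hxnn, hxeff, hxmono⟩ := hx
  obtain ⟨hie, p, hpi, hpdeg⟩ := hpend
  obtain ⟨q, rfl⟩ := Sym2.mem_iff_exists.mp hpi
  have hadj : G.Adj p q := G.mem_edgeSet.mp hie
  have hsingle_sub : ({s(p,q)} : Finset (Sym2 V)) ⊆ G.edgeFinset := by
    simpa using hS hiS
  have hγ1 : gammaIS G {s(p,q)} = 1 := gamma_pendant G hiso hadj hpdeg
  have heff1 := hxeff {s(p,q)} hsingle_sub ⟨_, Finset.mem_singleton_self _⟩
  rw [Finset.sum_singleton, hγ1] at heff1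
  push_cast at heff1
  have hlow : 1 ≤ x S s(p,q) := by
    have := hxmono {s(p,q)} S (Finset.singleton_subset_iff.mpr hiS) hS
      ⟨_, Finset.mem_singleton_self _⟩ s(p,q) (Finset.mem_singleton_self _)
    linarith
  have hup : x S s(p,q) ≤ 1 := by
    by_cases hT : (S.erase s(p,q)).Nonempty
    · have heffS := hxeff S hS ⟨_, hiS⟩
      have heffT := hxeff (S.erase s(p,q)) ((Finset.erase_subset _ _).trans hS) hT
      have hsum : ∑ j ∈ S.erase s(p,q), x (S.erase s(p,q)) j ≤
          ∑ j ∈ S.erase s(p,q), x S j :=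
        Finset.sum_le_sum fun j hj =>
          hxmono _ S (Finset.erase_subset _ _) hS hT j hj
      have hsplit : x S s(p,q) + ∑ j ∈ S.erase s(p,q), x S j = ∑ j ∈ S, x S j :=
        Finset.add_sum_erase S (x S) hiS
      have hγle : (gammaIS G S : ℝ) ≤ (gammaIS G (S.erase s(p,q)) : ℝ) + 1 := by
        exact_mod_cast gamma_erase G S hadj
      linarith
    · have hSeq : S = {s(p,q)} := by
        rw [Finset.not_nonempty_iff_eq_empty] at hT
        have := (Finset.erase_eq_empty_iff S s(p,q)).mp hT
        rcases this with h | h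
        · exact absurd hiS (h ▸ Finset.notMem_empty _)
        · exact h
      rw [hSeq]
      linarith [heff1]
  linarith
end

section
/- Let G = (V,E) be a finite simple graph with no isolated vertices. If the independent set game Γ_G is population monotonic, then no two non-pendant edges of type I are incident in G, i.e., no two distinct edges that are each not incident to any pendant edge share a common endpoint. -/
open Finset

variable {V : Type*} [Fintype V] [DecidableEq V]

/-!
In the coalition `T = δ(c) ∪ δ(w)` of an edge `cw`, each of the stars `δ(c)`, `δ(w)` receives
at least `γ(δ(·)) ≥ 1` under a PMAS, while together they count the edge `cw` twice. Hence if
`γ(T) ≤ 1`, the edge `cw` takes everything and every other edge of `T` gets `0`. For two incident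
edges `aw`, `bw` with `γ ≤ 1` on both coalitions, monotonicity then forces the whole star `δ(w)`
to get `0` in its own coalition, contradicting `γ(δ(w)) ≥ 1`.

When no pendant edge touches `aw`, every vertex `u ∉ {a, w}` with all neighbours in `{a, w}` is
adjacent to both `a` and `w`. There is no such vertex: if there is exactly one, `V⟨T⟩` is the
triangle `{a, w, u}`, so `γ(T) = 1` and the star `δ(u) ⊆ T \ {aw}` would get `0`; if there are
two, the triangle `a, u, w` already yields the contradiction above at `u`. So `V⟨T⟩ = {a, w}` and
`γ(T) ≤ 1`, for `aw` and for `bw` alike.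
-/

set_option linter.unusedSectionVars false

open SimpleGraph

variable {G : SimpleGraph V}

lemma one_le_alphaOn {U : Set V} {v : V} (hv : v ∈ U) : 1 ≤ alphaOn G U := by
  have hbdd : BddAbove {n : ℕ | ∃ I : Finset V, ↑I ⊆ U ∧ Indep G I ∧ I.card = n} :=
    ⟨Fintype.card V, by rintro n ⟨I, -, -, rfl⟩; exact card_le_univ I⟩
  refine le_csSup hbdd ⟨{v}, by simpa using hv, ?_, card_singleton v⟩
  intro p hp q hq
  rw [mem_singleton] at hp hq
  subst hp hq
  exact G.irrefl

lemma alphaOn_le_one {U C : Set V} (hUC : U ⊆ C) (hC : G.IsClique C) : alphaOn G U ≤ 1 := by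
  refine csSup_le' ?_
  rintro n ⟨I, hIU, hI, rfl⟩
  refine card_le_one.2 fun p hp q hq => ?_
  by_contra hpq
  exact hI p hp q hq (hC (hUC (hIU (mem_coe.2 hp))) (hUC (hIU (mem_coe.2 hq))) hpq)

/-- The vertices of `V⟨δ(c) ∪ δ(w)⟩` other than `c` and `w`. -/
def HangsOn (G : SimpleGraph V) (v c w : V) : Prop :=
  v ≠ c ∧ v ≠ w ∧ ∀ t, G.Adj v t → t = c ∨ t = w

lemma HangsOn.symm {v c w : V} (h : HangsOn G v c w) : HangsOn G v w c :=
  ⟨h.2.1, h.1, fun t ht => (h.2.2 t ht).symm⟩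

variable [DecidableRel G.Adj]

lemma HangsOn.adj_left (hiso : ∀ v : V, G.degree v ≠ 0) {u c w : V} (hu : HangsOn G u c w)
    (hw : ∀ v, G.Adj v w → G.degree v ≠ 1) : G.Adj u c := by
  by_contra huc
  have honly : ∀ t, G.Adj u t → t = w :=
    fun t ht => (hu.2.2 t ht).resolve_left fun h => huc (h ▸ ht)
  obtain ⟨t, ht⟩ := (G.degree_pos_iff_exists_adj u).1 (Nat.pos_of_ne_zero (hiso u))
  have huw : G.Adj u w := honly t ht ▸ ht
  exact hw u huw (degree_eq_one_iff_existsUnique_adj.2 ⟨w, huw, honly⟩)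

/-- A vertex hanging on `cu` is either `w`, which is adjacent to `q`, or a pendant neighbour
of `c`. -/
lemma HangsOn.not_hangsOn_of_adj (hiso : ∀ v : V, G.degree v ≠ 0) {u c w q : V}
    (hu : HangsOn G u c w) (hc : ∀ v, G.Adj v c → G.degree v ≠ 1)
    (hqw : G.Adj q w) (hqc : q ≠ c) (hqu : q ≠ u) (v : V) : ¬ HangsOn G v c u := by
  rintro ⟨hvc, hvu, hv⟩
  by_cases hvu' : G.Adj v u
  · obtain rfl : v = w := (hu.2.2 v hvu'.symm).resolve_left hvc
    rcases hv q hqw.symm with h | h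
    exacts [hqc h, hqu h]
  · have honly : ∀ t, G.Adj v t → t = c :=
      fun t ht => (hv t ht).resolve_right fun h => hvu' (h ▸ ht)
    obtain ⟨t, ht⟩ := (G.degree_pos_iff_exists_adj v).1 (Nat.pos_of_ne_zero (hiso v))
    have hvc' : G.Adj v c := honly t ht ▸ ht
    exact hc v hvc' (degree_eq_one_iff_existsUnique_adj.2 ⟨c, hvc', honly⟩)

lemma TypeI.degree_ne_one_of_adj {e : Sym2 V} (he : TypeI G e) {c : V} (hc : c ∈ e) (v : V)
    (hvc : G.Adj v c) : G.degree v ≠ 1 := fun hv =>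
  he.2.2 s(v, c) ⟨G.mem_edgeSet.2 hvc, v, Sym2.mem_mk_left v c, hv⟩
    ⟨c, hc, Sym2.mem_mk_right v c⟩

lemma mem_incFinset {g : Sym2 V} {v : V} : g ∈ incFinset G v ↔ g ∈ G.edgeSet ∧ v ∈ g := by
  simp [incFinset]

lemma incFinset_subset_edgeFinset (v : V) : incFinset G v ⊆ G.edgeFinset :=
  filter_subset _ _

lemma mk_mem_incFinset {v t : V} (h : G.Adj v t) : s(v, t) ∈ incFinset G v :=
  mem_incFinset.2 ⟨G.mem_edgeSet.2 h, Sym2.mem_mk_left v t⟩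

lemma incFinset_inter_incFinset {c w : V} (h : G.Adj c w) :
    incFinset G c ∩ incFinset G w = {s(c, w)} := by
  ext g
  simp only [mem_inter, mem_incFinset, mem_singleton]
  constructor
  · rintro ⟨⟨-, hc⟩, -, hw⟩
    exact (Sym2.mem_and_mem_iff h.ne).1 ⟨hc, hw⟩
  · rintro rfl
    exact ⟨⟨G.mem_edgeSet.2 h, Sym2.mem_mk_left c w⟩, G.mem_edgeSet.2 h,
      Sym2.mem_mk_right c w⟩

lemma one_le_gammaIS_incFinset (v : V) : 1 ≤ gammaIS G (incFinset G v) :=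
  one_le_alphaOn fun g hg => by simpa [incFinset, incEdges] using hg

lemma mem_onlyInc_pair {c w v : V}
    (hv : v ∈ onlyInc G ↑(incFinset G c ∪ incFinset G w)) :
    v = c ∨ v = w ∨ HangsOn G v c w := by
  by_cases hvc : v = c
  · exact Or.inl hvc
  by_cases hvw : v = w
  · exact Or.inr (Or.inl hvw)
  refine Or.inr (Or.inr ⟨hvc, hvw, fun t ht => ?_⟩)
  have hmem := hv ⟨G.mem_edgeSet.2 ht, Sym2.mem_mk_left v t⟩
  simp only [coe_union, Set.mem_union, mem_coe, mem_incFinset, Sym2.mem_iff] at hmem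
  grind

lemma gammaIS_pair_le_one_of_isClique {c w : V} {C : Set V} (hC : G.IsClique C) (hc : c ∈ C)
    (hw : w ∈ C) (hU : ∀ v, HangsOn G v c w → v ∈ C) :
    gammaIS G (incFinset G c ∪ incFinset G w) ≤ 1 := by
  refine alphaOn_le_one (fun v hv => ?_) hC
  rcases mem_onlyInc_pair hv with rfl | rfl | h
  exacts [hc, hw, hU v h]

lemma HangsOn.incFinset_subset {v c w : V} (h : HangsOn G v c w) :
    incFinset G v ⊆ (incFinset G c ∪ incFinset G w).erase s(c, w) := by
  intro g hg
  obtain ⟨hgE, hvg⟩ := mem_incFinset.1 hg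
  obtain ⟨t, rfl⟩ := Sym2.mem_iff_exists.1 hvg
  refine mem_erase.2 ⟨fun hcw => ?_, ?_⟩
  · rcases Sym2.mem_iff.1 (hcw ▸ hvg) with h' | h'
    exacts [h.1 h', h.2.1 h']
  · rcases h.2.2 t (G.mem_edgeSet.1 hgE) with rfl | rfl
    · exact mem_union_left _ (mem_incFinset.2 ⟨hgE, Sym2.mem_mk_right v t⟩)
    · exact mem_union_right _ (mem_incFinset.2 ⟨hgE, Sym2.mem_mk_right v t⟩)

variable {x : Finset (Sym2 V) → Sym2 V → ℝ}

lemma IsPMAS.one_le_sum_incFinset (hx : IsPMAS G x) {T : Finset (Sym2 V)}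
    (hT : T ⊆ G.edgeFinset) {v t : V} (hvt : G.Adj v t) (hvT : incFinset G v ⊆ T) :
    1 ≤ ∑ g ∈ incFinset G v, x T g := by
  have hne : (incFinset G v).Nonempty := ⟨_, mk_mem_incFinset hvt⟩
  calc (1 : ℝ) ≤ gammaIS G (incFinset G v) := by exact_mod_cast one_le_gammaIS_incFinset v
    _ = ∑ g ∈ incFinset G v, x (incFinset G v) g :=
      (hx.2.1 _ (incFinset_subset_edgeFinset v) hne).symm
    _ ≤ ∑ g ∈ incFinset G v, x T g := sum_le_sum fun g hg => hx.2.2 _ _ hvT hT hne g hg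

lemma IsPMAS.eq_zero_of_gammaIS_pair_le_one (hx : IsPMAS G x) {c w : V} (hcw : G.Adj c w)
    (hγ : gammaIS G (incFinset G c ∪ incFinset G w) ≤ 1) :
    ∀ g ∈ (incFinset G c ∪ incFinset G w).erase s(c, w),
      x (incFinset G c ∪ incFinset G w) g = 0 := by
  set T := incFinset G c ∪ incFinset G w
  have hT : T ⊆ G.edgeFinset :=
    union_subset (incFinset_subset_edgeFinset c) (incFinset_subset_edgeFinset w)
  have hcwT : s(c, w) ∈ T := mem_union_left _ (mk_mem_incFinset hcw)
  have hsplit : ∑ g ∈ T, x T g + x T s(c, w) =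
      ∑ g ∈ incFinset G c, x T g + ∑ g ∈ incFinset G w, x T g := by
    rw [← sum_union_inter, incFinset_inter_incFinset hcw, sum_singleton]
  have hsum : ∑ g ∈ T, x T g = gammaIS G T := hx.2.1 T hT ⟨_, hcwT⟩
  have herase := sum_erase_add T (x T) hcwT
  have hc := hx.one_le_sum_incFinset hT hcw subset_union_left
  have hw := hx.one_le_sum_incFinset hT hcw.symm subset_union_right
  have hγ' : (gammaIS G T : ℝ) ≤ 1 := by exact_mod_cast hγ
  have hnn : ∀ g ∈ T.erase s(c, w), 0 ≤ x T g := fun g hg => hx.1 T hT g (mem_of_mem_erase hg)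
  have hzero : ∑ g ∈ T.erase s(c, w), x T g = 0 :=
    le_antisymm (by linarith) (sum_nonneg hnn)
  exact (sum_eq_zero_iff_of_nonneg hnn).1 hzero

lemma not_isPMAS_of_hangsOn {c w u : V} (hcw : G.Adj c w)
    (hγ : gammaIS G (incFinset G c ∪ incFinset G w) ≤ 1) (hu : HangsOn G u c w)
    (huc : G.Adj u c) : ¬ IsPMAS G x := by
  intro hx
  have hT : incFinset G c ∪ incFinset G w ⊆ G.edgeFinset :=
    union_subset (incFinset_subset_edgeFinset c) (incFinset_subset_edgeFinset w)
  have hone := hx.one_le_sum_incFinset hT huc (hu.incFinset_subset.trans (erase_subset _ _))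
  rw [sum_eq_zero fun g hg => hx.eq_zero_of_gammaIS_pair_le_one hcw hγ g
    (hu.incFinset_subset hg)] at hone
  norm_num at hone

lemma not_isPMAS_of_gammaIS_pair_le_one {a b w : V} (hab : a ≠ b) (haw : G.Adj a w)
    (hbw : G.Adj b w) (ha : gammaIS G (incFinset G a ∪ incFinset G w) ≤ 1)
    (hb : gammaIS G (incFinset G b ∪ incFinset G w) ≤ 1) : ¬ IsPMAS G x := by
  intro hx
  have hzero : ∀ g ∈ incFinset G w, x (incFinset G w) g ≤ 0 := by
    intro g hg
    have key : ∀ c, G.Adj c w → gammaIS G (incFinset G c ∪ incFinset G w) ≤ 1 →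
        g ≠ s(c, w) → x (incFinset G w) g ≤ 0 := fun c hcw hγ hne =>
      (hx.2.2 _ _ subset_union_right
        (union_subset (incFinset_subset_edgeFinset c) (incFinset_subset_edgeFinset w))
        ⟨g, hg⟩ g hg).trans_eq
        (hx.eq_zero_of_gammaIS_pair_le_one hcw hγ g (mem_erase.2 ⟨hne, mem_union_right _ hg⟩))
    by_cases hga : g = s(a, w)
    · exact key b hbw hb (hga ▸ fun h => hab (Sym2.congr_left.1 h))
    · exact key a haw ha hga
  have hone := hx.one_le_sum_incFinset (incFinset_subset_edgeFinset w) haw.symm subset_rfl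
  linarith [sum_nonpos hzero]

lemma IsPMAS.gammaIS_pair_le_one (hx : IsPMAS G x) (hiso : ∀ v : V, G.degree v ≠ 0)
    {c w : V} (hcw : G.Adj c w) (hc : ∀ v, G.Adj v c → G.degree v ≠ 1)
    (hw : ∀ v, G.Adj v w → G.degree v ≠ 1) :
    gammaIS G (incFinset G c ∪ incFinset G w) ≤ 1 := by
  refine gammaIS_pair_le_one_of_isClique (isClique_pair.2 fun _ => hcw) (by simp) (by simp)
    fun u hu => ?_
  have huc := hu.adj_left hiso hw
  have huw := hu.symm.adj_left hiso hc
  by_cases hsecond : ∃ q, HangsOn G q c w ∧ q ≠ u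
  · obtain ⟨q, hq, hqu⟩ := hsecond
    have hqw := hq.symm.adj_left hiso hc
    have hqc := hq.adj_left hiso hw
    refine absurd hx (not_isPMAS_of_gammaIS_pair_le_one hcw.ne huc.symm huw.symm ?_ ?_)
    · exact gammaIS_pair_le_one_of_isClique (isClique_pair.2 fun _ => huc.symm) (by simp)
        (by simp) fun v hv => (hu.not_hangsOn_of_adj hiso hc hqw hq.1 hqu v hv).elim
    · exact gammaIS_pair_le_one_of_isClique (isClique_pair.2 fun _ => huw.symm) (by simp)
        (by simp) fun v hv => (hu.symm.not_hangsOn_of_adj hiso hw hqc hq.2.1 hqu v hv).elim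
  · push Not at hsecond
    have hclique : G.IsClique ({c, w, u} : Set V) := by
      simp only [isClique_insert, isClique_singleton, Set.mem_insert_iff, Set.mem_singleton_iff,
        forall_eq_or_imp, forall_eq, true_and]
      exact ⟨fun _ => huw.symm, fun _ => hcw, fun _ => huc.symm⟩
    exact absurd hx (not_isPMAS_of_hangsOn hcw
      (gammaIS_pair_le_one_of_isClique hclique (by simp) (by simp)
        fun v hv => by simp [hsecond v hv]) hu huc)

/-- Lemma 7 of the paper.  If the independent set game on a
graph `G` with no isolated vertices is population monotonic, then no two distinct
non-pendant edges of type I share a common endpoint. -/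
theorem stmt_7 (G : SimpleGraph V) [DecidableRel G.Adj]
    (hiso : ∀ v : V, G.degree v ≠ 0)
    (hpm : ∃ x : Finset (Sym2 V) → Sym2 V → ℝ, IsPMAS G x) :
    ∀ e f : Sym2 V, TypeI G e → TypeI G f → e ≠ f →
      ¬ ∃ w : V, w ∈ e ∧ w ∈ f := by
  obtain ⟨x, hx⟩ := hpm
  rintro e f he hf hef ⟨w, hwe, hwf⟩
  obtain ⟨a, rfl⟩ := Sym2.mem_iff_exists.1 hwe
  obtain ⟨b, rfl⟩ := Sym2.mem_iff_exists.1 hwf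
  have haw : G.Adj a w := (G.mem_edgeSet.1 he.1).symm
  have hbw : G.Adj b w := (G.mem_edgeSet.1 hf.1).symm
  have hw := he.degree_ne_one_of_adj (Sym2.mem_mk_left w a)
  refine not_isPMAS_of_gammaIS_pair_le_one (by rintro rfl; exact hef rfl) haw hbw ?_ ?_ hx
  · exact hx.gammaIS_pair_le_one hiso haw (he.degree_ne_one_of_adj (Sym2.mem_mk_right w a)) hw
  · exact hx.gammaIS_pair_le_one hiso hbw (hf.degree_ne_one_of_adj (Sym2.mem_mk_right w b)) hw
end
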